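/- arXiv:2306.13336 — 6 statements merged into one kernel-verified Lean document; each statement's English description precedes it below -/
import Mathlib

section
/- If A is a cubic-matrix of order 3 all of whose entries in some plane with one of the three indices fixed are zero, then det₃(A) = 0. -/
def det3 {F : Type*} [Field F] (A : Fin 3 → Fin 3 → Fin 3 → F) : F :=
  A 0 0 0 * A 1 1 1 * A 2 2 2 - A 0 0 0 * A 1 2 1 * A 2 1 2 - A 0 0 0 * A 1 1 2 * A 2 2 1 + A 0 0 0 * A 1 2 2 * A 2 1 1 - A 0 0 1 * A 1 1 0 * A 2 2 2 + A 0 0 1 * A 1 1 2 * A 2 2 0 + A 0 0 1 * A 1 2 0 * A 2 1 2 - A 0 0 1 * A 1 2 2 * A 2 1 0 + A 0 0 2 * A 1 1 0 * A 2 2 1 - A 0 0 2 * A 1 1 1 * A 2 2 0 - A 0 0 2 * A 1 2 0 * A 2 1 1 + A 0 0 2 * A 1 2 1 * A 2 1 0 - A 0 1 0 * A 1 0 1 * A 2 2 2 + A 0 1 0 * A 1 0 2 * A 2 2 1 + A 0 1 0 * A 1 2 1 * A 2 0 2 - A 0 1 0 * A 1 2 2 * A 2 0 1 + A 0 1 1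 * A 1 0 0 * A 2 2 2 - A 0 1 1 * A 1 0 2 * A 2 2 0 - A 0 1 1 * A 1 2 0 * A 2 0 2 + A 0 1 1 * A 1 2 2 * A 2 0 0 - A 0 1 2 * A 1 0 0 * A 2 2 1 + A 0 1 2 * A 1 0 1 * A 2 2 0 + A 0 1 2 * A 1 2 0 * A 2 0 1 - A 0 1 2 * A 1 2 1 * A 2 0 0 + A 0 2 0 * A 1 0 1 * A 2 1 2 - A 0 2 0 * A 1 0 2 * A 2 1 1 - A 0 2 0 * A 1 1 1 * A 2 0 2 + A 0 2 0 * A 1 1 2 * A 2 0 1 - A 0 2 1 * A 1 0 0 * A 2 1 2 + A 0 2 1 * A 1 0 2 * A 2 1 0 + A 0 2 1 * A 1 1 0 * A 2 0 2 - A 0 2 1 * A 1 1 2 * A 2 0 0 + A 0 2 2 * A 1 0 0 * A 2 1 1 - A 0 2 2 * A 1 0 1 * A 2 1 0 - A 0 2 2 * A 1 1 0 * A 2 0 1 + A 0 2 2 * A 1 1 1 * A 2 0 0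

/-! Each of the 36 monomials of `det3 A` takes exactly one factor from every plane, in each of the
three directions, so all of them vanish as soon as one plane is zero. -/

section

variable {F : Type*} [Field F] (A : Fin 3 → Fin 3 → Fin 3 → F)

theorem det3_eq_zero_of_plane₁_eq_zero (i₀ : Fin 3) (h : ∀ j k, A i₀ j k = 0) : det3 A = 0 := by
  obtain rfl | rfl | rfl : i₀ = 0 ∨ i₀ = 1 ∨ i₀ = 2 := by omega
  all_goals simp [det3, h]

theorem det3_eq_zero_of_plane₂_eq_zero (j₀ : Fin 3) (h : ∀ i k, A i j₀ k = 0) : det3 A = 0 := by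
  obtain rfl | rfl | rfl : j₀ = 0 ∨ j₀ = 1 ∨ j₀ = 2 := by omega
  all_goals simp [det3, h]

theorem det3_eq_zero_of_plane₃_eq_zero (k₀ : Fin 3) (h : ∀ i j, A i j k₀ = 0) : det3 A = 0 := by
  obtain rfl | rfl | rfl : k₀ = 0 ∨ k₀ = 1 ∨ k₀ = 2 := by omega
  all_goals simp [det3, h]

end

theorem det3_zero_plane {F : Type*} [Field F]
    (A : Fin 3 → Fin 3 → Fin 3 → F)
    (h : (∃ i₀, ∀ j k, A i₀ j k = 0) ∨ (∃ j₀, ∀ i k, A i j₀ k = 0) ∨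
      (∃ k₀, ∀ i j, A i j k₀ = 0)) : det3 A = 0 := by
  rcases h with ⟨i₀, h⟩ | ⟨j₀, h⟩ | ⟨k₀, h⟩
  · exact det3_eq_zero_of_plane₁_eq_zero A i₀ h
  · exact det3_eq_zero_of_plane₂_eq_zero A j₀ h
  · exact det3_eq_zero_of_plane₃_eq_zero A k₀ h
end

section
/- Let A be a cubic-matrix of order 3 and let B be obtained from A by multiplying all entries of one plane (one of the three indices fixed to a given value) by a scalar α. Then det₃(B) = α · det₃(A). -/
open Equiv Finset

theorem Fintype.prod_ite_mul_eq_mul_prod {ι M : Type*} [Fintype ι] [DecidableEq ι] [CommMonoid M]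
    (p : ι → Prop) [DecidablePred p] (i₀ : ι) (hp : ∀ i, p i ↔ i = i₀) (α : M) (f : ι → M) :
    ∏ i, (if p i then α * f i else f i) = α * ∏ i, f i := by
  have factor : ∀ i, (if p i then α * f i else f i) = (if i = i₀ then α else 1) * f i := fun i => by
    simp only [hp, ite_mul, one_mul]
  simp only [factor, prod_mul_distrib, Fintype.prod_ite_eq']

def cubeDet {ι R : Type*} [Fintype ι] [DecidableEq ι] [CommRing R] (A : ι → ι → ι → R) : R :=
  ∑ σ : Perm ι, ∑ τ : Perm ι, (Perm.sign σ * Perm.sign τ) • ∏ i, A i (σ i) (τ i)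

theorem Fin.sum_univ_perm_three {M : Type*} [AddCommMonoid M] (f : Perm (Fin 3) → M) :
    ∑ σ, f σ = f 1 + f (swap 0 1) + f (swap 0 2) + f (swap 1 2) + f (finRotate 3)
      + f (finRotate 3 * finRotate 3) := by
  have univ_eq : (univ : Finset (Perm (Fin 3))) =
      {1, swap 0 1, swap 0 2, swap 1 2, finRotate 3, finRotate 3 * finRotate 3} := by decide
  rw [univ_eq, sum_insert (by decide), sum_insert (by decide), sum_insert (by decide),
    sum_insert (by decide), sum_insert (by decide), sum_singleton]
  simp only [add_assoc]

theorem det3_eq_cubeDet {F : Type*} [Field F] (A : Fin 3 → Fin 3 → Fin 3 → F) :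
    det3 A = cubeDet A := by
  simp only [cubeDet, Fin.sum_univ_perm_three, Fin.prod_univ_three,
    Perm.sign_one, Perm.sign_swap', Perm.sign_mul, sign_finRotate, Perm.one_apply, Perm.mul_apply,
    swap_apply_def, finRotate_apply, Units.smul_def, zsmul_eq_mul]
  unfold det3
  push_cast
  ring

section

variable {ι R : Type*} [Fintype ι] [DecidableEq ι] [CommRing R]

theorem cubeDet_eq_mul_of_prod_eq_mul {A B : ι → ι → ι → R} {α : R}
    (h : ∀ σ τ : Perm ι, ∏ i, B i (σ i) (τ i) = α * ∏ i, A i (σ i) (τ i)) :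
    cubeDet B = α * cubeDet A := by
  simp only [cubeDet, h, mul_sum, mul_smul_comm]

theorem cubeDet_of_scale_plane_fst {A B : ι → ι → ι → R} {α : R} (i₀ : ι)
    (hB : ∀ i j k, B i j k = if i = i₀ then α * A i j k else A i j k) :
    cubeDet B = α * cubeDet A :=
  cubeDet_eq_mul_of_prod_eq_mul fun σ τ => by
    simp only [hB]
    exact Fintype.prod_ite_mul_eq_mul_prod _ i₀ (fun _ => Iff.rfl) α _

theorem cubeDet_of_scale_plane_snd {A B : ι → ι → ι → R} {α : R} (j₀ : ι)
    (hB : ∀ i j k, B i j k = if j = j₀ then α * A i j k else A i j k) :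
    cubeDet B = α * cubeDet A :=
  cubeDet_eq_mul_of_prod_eq_mul fun σ τ => by
    simp only [hB]
    exact Fintype.prod_ite_mul_eq_mul_prod _ (σ.symm j₀) (fun _ => σ.eq_symm_apply.symm) α _

theorem cubeDet_of_scale_plane_thd {A B : ι → ι → ι → R} {α : R} (k₀ : ι)
    (hB : ∀ i j k, B i j k = if k = k₀ then α * A i j k else A i j k) :
    cubeDet B = α * cubeDet A :=
  cubeDet_eq_mul_of_prod_eq_mul fun σ τ => by
    simp only [hB]
    exact Fintype.prod_ite_mul_eq_mul_prod _ (τ.symm k₀) (fun _ => τ.eq_symm_apply.symm) α _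

end

theorem det3_smul_plane {F : Type*} [Field F]
    (A B : Fin 3 → Fin 3 → Fin 3 → F) (α : F)
    (hB : (∃ i₀, ∀ i j k, B i j k = if i = i₀ then α * A i j k else A i j k) ∨
      (∃ j₀, ∀ i j k, B i j k = if j = j₀ then α * A i j k else A i j k) ∨
      (∃ k₀, ∀ i j k, B i j k = if k = k₀ then α * A i j k else A i j k)) :
    det3 B = α * det3 A := by
  rw [det3_eq_cubeDet, det3_eq_cubeDet]
  rcases hB with ⟨i₀, hB⟩ | ⟨j₀, hB⟩ | ⟨k₀, hB⟩
  · exact cubeDet_of_scale_plane_fst i₀ hB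
  · exact cubeDet_of_scale_plane_snd j₀ hB
  · exact cubeDet_of_scale_plane_thd k₀ hB
end

section
/- Let A be a cubic-matrix of order 2 and let B be obtained from A by interchanging its two horizontal layers (swapping the first index values 1 and 2). Then det₂(B) = det₂(A). -/
def det2 {F : Type*} [Field F] (A : Fin 2 → Fin 2 → Fin 2 → F) : F :=
  A 0 0 0 * A 1 1 1 - A 0 0 1 * A 1 1 0 - A 0 1 0 * A 1 0 1 + A 0 1 1 * A 1 0 0

theorem det2_swap_horizontal_layers {F : Type*} [Field F]
    (A B : Fin 2 → Fin 2 → Fin 2 → F)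
    (hB : ∀ i j k, B i j k = A (Equiv.swap 0 1 i) j k) :
    det2 B = det2 A := by
  have hB₀ : B 0 = A 1 := funext₂ fun j k => by simpa using hB 0 j k
  have hB₁ : B 1 = A 0 := funext₂ fun j k => by simpa using hB 1 j k
  simp only [det2, hB₀, hB₁]
  ring
end

section
/- Let A be a cubic-matrix of order 3 and let B be obtained from A by interchanging two consecutive horizontal layers (swapping two values of the first index). Then det₃(B) = det₃(A). -/
open Equiv Finset

section CubicDet

variable {ι R : Type*} [Fintype ι] [DecidableEq ι] [CommRing R]

def cubicDet (A : ι → ι → ι → R) : R :=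
  ∑ τ : Perm ι, ∑ ρ : Perm ι, (Perm.sign τ * Perm.sign ρ) • ∏ i, A i (τ i) (ρ i)

theorem cubicDet_comp_left (A : ι → ι → ι → R) (σ : Perm ι) :
    cubicDet (fun i => A (σ i)) = cubicDet A := by
  unfold cubicDet
  rw [← Equiv.sum_comp (Equiv.mulRight σ)]
  refine sum_congr rfl fun τ _ => ?_
  rw [← Equiv.sum_comp (Equiv.mulRight σ)]
  refine sum_congr rfl fun ρ _ => ?_
  have hsign : Perm.sign (τ * σ) * Perm.sign (ρ * σ) = Perm.sign τ * Perm.sign ρ := by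
    rw [Perm.sign_mul, Perm.sign_mul, mul_mul_mul_comm, Int.units_mul_self, mul_one]
  simp only [coe_mulRight, Perm.mul_apply, hsign, Equiv.prod_comp σ fun j => A j (τ j) (ρ j)]

end CubicDet

theorem univ_perm_fin_three : (univ : Finset (Perm (Fin 3))) =
    {1, swap 0 1, swap 0 2, swap 1 2, swap 0 1 * swap 1 2, swap 0 2 * swap 1 2} := by
  decide

theorem sum_perm_fin_three {M : Type*} [AddCommMonoid M] (f : Perm (Fin 3) → M) :
    ∑ τ, f τ = f 1 + f (swap 0 1) + f (swap 0 2) + f (swap 1 2) + f (swap 0 1 * swap 1 2) +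
      f (swap 0 2 * swap 1 2) := by
  rw [univ_perm_fin_three, sum_insert (by decide), sum_insert (by decide), sum_insert (by decide),
    sum_insert (by decide), sum_insert (by decide), sum_singleton]
  abel

theorem cubicDet_eq_det3 {F : Type*} [Field F] (A : Fin 3 → Fin 3 → Fin 3 → F) :
    cubicDet A = det3 A := by
  simp only [cubicDet, sum_perm_fin_three, Fin.prod_univ_three, Units.smul_def, Units.val_mul,
    zsmul_eq_mul, Int.cast_mul, Perm.sign_one, Units.val_one, Int.cast_one, Perm.coe_one, id_eq,
    Perm.sign_swap', ↓reduceIte, Units.val_neg, Int.cast_neg, swap_apply_left, swap_apply_right,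
    ne_eq, Fin.reduceEq, not_false_eq_true, swap_apply_of_ne_of_ne, Perm.sign_mul,
    Perm.coe_mul, Function.comp_apply, det3]
  ring

theorem det3_swap_horizontal_layers_general {F : Type*} [Field F]
    (A B : Fin 3 → Fin 3 → Fin 3 → F) (σ : Equiv.Perm (Fin 3))
    (hB : ∀ i j k, B i j k = A (σ i) j k) :
    det3 B = det3 A := by
  rw [← cubicDet_eq_det3, ← cubicDet_eq_det3, funext₃ hB, cubicDet_comp_left]

theorem det3_swap_horizontal_layers {F : Type*} [Field F]
    (A B : Fin 3 → Fin 3 → Fin 3 → F) (σ : Equiv.Perm (Fin 3))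
    (hσ : σ = Equiv.swap 0 1 ∨ σ = Equiv.swap 1 2)
    (hB : ∀ i j k, B i j k = A (σ i) j k) :
    det3 B = det3 A :=
  det3_swap_horizontal_layers_general A B σ hB
end

section
/- Let A be a cubic-matrix of order 2 and let B be obtained from A by interchanging its two vertical layers (swapping the third index values). Then det₂(B) = −det₂(A). -/
theorem det2_swap_third_index {F : Type*} [Field F] (A : Fin 2 → Fin 2 → Fin 2 → F) :
    det2 (fun i j k => A i j (Equiv.swap 0 1 k)) = -det2 A := by
  simp only [det2, Equiv.swap_apply_left, Equiv.swap_apply_right]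
  ring

theorem det2_swap_vertical_layers {F : Type*} [Field F]
    (A B : Fin 2 → Fin 2 → Fin 2 → F)
    (hB : ∀ i j k, B i j k = A i j (Equiv.swap 0 1 k)) :
    det2 B = -det2 A := by
  have hB' : B = fun i j k => A i j (Equiv.swap 0 1 k) := funext₃ hB
  rw [hB', det2_swap_third_index]
end

section
/- The determinant det₃ of a cubic-matrix of order 3 satisfies the Laplace-type expansion along the first horizontal layer: det₃(A) = Σ_{j,k} (−1)^{j+k} · a_{1jk} · det₂(M_{jk}), where M_{jk} is the order-2 cubic-matrix obtained from A by deleting the horizontal layer i = 1, the vertical page j, and the vertical layer k. -/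
theorem det3_laplace_first_layer {F : Type*} [Field F]
    (A : Fin 3 → Fin 3 → Fin 3 → F) :
    det3 A = ∑ j : Fin 3, ∑ k : Fin 3,
      (-1 : F) ^ ((j : ℕ) + (k : ℕ)) * A 0 j k *
        det2 (fun i' j' k' => A i'.succ (j.succAbove j') (k.succAbove k')) := by
  simp only [det3, det2, Fin.sum_univ_three, Fin.val_zero, Fin.val_one, Fin.val_two]
  simp only [Fin.succAbove, Fin.succ_zero_eq_one, Fin.succ_one_eq_two, Fin.castSucc_zero,
    Fin.castSucc_one, Fin.reduceLT, ↓reduceIte]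
  ring
end
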